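/- arXiv:1806.04837 — 2 statements merged into one kernel-verified Lean document; each statement's English description precedes it below -/
import Mathlib

section
/- Set D*_X = Σ_{n≥1} X^n δ_n. For any w ∈ Ĥ¹ it holds that D*_X(w) = φ(X) *_q w − φ(X)·w in Ĥ¹[[X]], where φ(X) = (log(1 + aX))·b = Σ_{n≥1} ((−1)^{n−1}/n) a^n b X^n. -/
noncomputable section

/-- The coefficient ring `𝒞 = ℚ[ℏ, ℏ⁻¹]`, realized as Laurent polynomials over `ℚ`. -/
abbrev CC : Type := LaurentPolynomial ℚ

/-- The variable `ℏ ∈ 𝒞`. -/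
def hb : CC := LaurentPolynomial.T 1

/-- Embedding of rational constants into `𝒞`. -/
def qs (x : ℚ) : CC := algebraMap ℚ CC x

/-- The non-commutative polynomial ring `H = 𝒞⟨a, b⟩`. -/
abbrev H : Type := FreeAlgebra CC (Fin 2)

/-- The generator `a`. -/
def av : H := FreeAlgebra.ι CC 0

/-- The generator `b`. -/
def bv : H := FreeAlgebra.ι CC 1

/-- `e k` for `k : ℕ`:  `e 0 = e_{1̄} = ab`, and `e (k+1) = e_{k+1} = a^k (a+ℏ) b`. -/
def ev : ℕ → H
  | 0 => av * bv
  | (k+1) => av ^ k * (av + algebraMap CC H hb) * bv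

/-- The monomial `e_{k_1} ⋯ e_{k_r}` attached to an index (a list over `N̂`,
with `0` encoding `1̄` and `k+1` encoding the positive integer `k+1`). -/
def eword (l : List ℕ) : H := (l.map ev).prod

/-- `Ĥ¹`, as the `𝒞`-span of all monomials `e_k` (this coincides with the subalgebra
freely generated by the `e_k`). -/
def H1 : Submodule CC H := Submodule.span CC {x : H | ∃ l : List ℕ, x = eword l}

/-- `Ĥ⁰`, the `𝒞`-span of monomials `e_k` with `k ∈ Î₀` (first entry `≠ 1`). -/
def H0 : Submodule CC H := Submodule.span CC
  {x : H | ∃ l : List ℕ, l.head? ≠ some 1 ∧ x = eword l}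

/-- The circle product `∘_q` on the generators. -/
def circ : ℕ → ℕ → H
  | 0, 0 => ev 2 - hb • ev 0
  | 0, (l+1) => ev (l+2)
  | (k+1), 0 => ev (k+2)
  | (k+1), (l+1) => ev (k+l+2) + hb • ev (k+l+1)

/-- The defining properties of the shuffle product `⧢_q` on `H`. -/
def IsShuffle (sh : H →ₗ[CC] H →ₗ[CC] H) : Prop :=
  (∀ w : H, sh 1 w = w) ∧ (∀ w : H, sh w 1 = w) ∧
  (∀ w w' : H, sh (av * w) (av * w') =
      av * (sh (av * w) w' + sh w (av * w') + hb • sh w w')) ∧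
  (∀ w w' : H, sh (bv * w) w' = bv * sh w w') ∧
  (∀ w w' : H, sh w (bv * w') = bv * sh w w')

/-- The defining properties of the stuffle product `*_q` on `Ĥ¹`. -/
def IsStuffle (st : H →ₗ[CC] H →ₗ[CC] H) : Prop :=
  (∀ w : H, st 1 w = w) ∧ (∀ w : H, st w 1 = w) ∧
  (∀ k l : ℕ, ∀ w w' : H, w ∈ H1 → w' ∈ H1 →
    st (ev k * w) (ev l * w') =
      ev k * st w (ev l * w') + ev l * st (ev k * w) w' + circ k l * st w w')

/-- The q-integer `[m] = (1-q^m)/(1-q)`. -/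
def qint (q : ℂ) (m : ℕ) : ℂ := (1 - q ^ m) / (1 - q)

/-- `F_k(m)`:  `F 0 = F_{1̄}` and `F (k+1) = F_{k+1}`. -/
def Fq (q : ℂ) : ℕ → ℕ → ℂ
  | 0, m => q ^ m / qint q m
  | (k+1), m => q ^ (k * m) / (qint q m) ^ (k + 1)

/-- `ζ_q(k)` for an index `k` (a list over `N̂`): the sum over `m_1 > ⋯ > m_r ≥ 1`. -/
def zetaq (q : ℂ) (l : List ℕ) : ℂ :=
  ∑' m : {f : Fin l.length → ℕ // StrictAnti f ∧ ∀ i, 0 < f i},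
    ∏ i : Fin l.length, Fq q (l.get i) (m.1 i)

/-- The defining properties of the `𝒞`-linear map `Z_q` (as a map on all of `H`
extending the one on `Ĥ⁰`): additive, `𝒞`-semilinear along `ρ`, sending `e_k ↦ ζ_q(k)`
for `k ∈ Î₀`. -/
def IsZq (ρ : CC →ₐ[ℚ] ℂ) (q : ℂ) (Z : H →+ ℂ) : Prop :=
  (∀ c : CC, ∀ w : H, Z (c • w) = ρ c * Z w) ∧
  (∀ l : List ℕ, l.head? ≠ some 1 → Z (eword l) = zetaq q l)


/-- The `𝒞[[X]]`-bilinear extension to `H[[X]]` of a `𝒞`-bilinear product `m` on `H`. -/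
def extMul (m : H →ₗ[CC] H →ₗ[CC] H) (f g : PowerSeries H) : PowerSeries H :=
  PowerSeries.mk fun N =>
    ∑ p ∈ Finset.HasAntidiagonal.antidiagonal N, m (PowerSeries.coeff (R := H) p.1 f) (PowerSeries.coeff (R := H) p.2 g)

/-- `n`-fold power with respect to the product `extMul m`, with `f^1 = f`. -/
def itpow (m : H →ₗ[CC] H →ₗ[CC] H) (f : PowerSeries H) : ℕ → PowerSeries H
  | 0 => 1
  | 1 => f
  | (n+2) => extMul m f (itpow m f (n+1))

/-- `log_m (1 + f) = Σ_{n≥1} ((−1)^{n−1}/n) f^{m n}`, defined coefficientwise (for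
`f ∈ X·H[[X]]` the sum over `n` contributing to the `N`-th coefficient is finite,
namely `1 ≤ n ≤ N`). -/
def serlog (m : H →ₗ[CC] H →ₗ[CC] H) (f : PowerSeries H) : PowerSeries H :=
  PowerSeries.mk fun N =>
    ∑ n ∈ Finset.Icc 1 N, qs ((-1 : ℚ) ^ (n - 1) / (n : ℚ)) • PowerSeries.coeff (R := H) N (itpow m f n)

/-- The geometric series `1/(1 − e_{1̄}X) = Σ_{n≥0} e_{1̄}^n X^n`. -/
def geom : PowerSeries H := PowerSeries.mk fun n => (av * bv) ^ n

/-- The series `e_{1̄} X`. -/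
def e1X : PowerSeries H := PowerSeries.mk fun n => if n = 1 then av * bv else 0

/-- `ψ(X) = (1/ℏ)·a·log(1 + ℏbX) = Σ_{n≥1} ((−1)^{n−1}/n) ℏ^{n−1} a b^n X^n`. -/
def psiS : PowerSeries H := PowerSeries.mk fun n =>
  if n = 0 then 0 else (qs ((-1 : ℚ) ^ (n - 1) / (n : ℚ)) * hb ^ (n - 1)) • (av * bv ^ n)

/-- `φ(X) = (log(1 + aX))·b = Σ_{n≥1} ((−1)^{n−1}/n) a^n b X^n`. -/
def phiS : PowerSeries H := PowerSeries.mk fun n =>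
  if n = 0 then 0 else qs ((-1 : ℚ) ^ (n - 1) / (n : ℚ)) • (av ^ n * bv)

/-- `log(1 + ℏbX) = Σ_{n≥1} ((−1)^{n−1}/n) ℏ^n b^n X^n`. -/
def lgS : PowerSeries H := PowerSeries.mk fun n =>
  if n = 0 then 0 else (qs ((-1 : ℚ) ^ (n - 1) / (n : ℚ)) * hb ^ n) • (bv ^ n)


/-- The defining properties of the family of `𝒞`-linear derivations `δ_n` (`n ≥ 1`)
on `H`: `δ_n(a) = 0`, `δ_n(b) = ((−1)^{n−1}/n)(b+1)a^n b`. -/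
def IsDelta (δ : ℕ → H →ₗ[CC] H) : Prop :=
  ∀ n : ℕ, 1 ≤ n →
    (∀ u v : H, δ n (u * v) = δ n u * v + u * δ n v) ∧
    δ n av = 0 ∧
    δ n bv = qs ((-1 : ℚ) ^ (n - 1) / (n : ℚ)) • ((bv + 1) * av ^ n * bv)

/-!
Both sides are `𝒞`-linear in `w`, so it suffices to compare the coefficients of `Xⁿ` on words
`e_{k_1} ⋯ e_{k_r}`, where the claim reads `δ_n(w) = cₙ (aⁿb *_q w - aⁿb · w)` with
`cₙ = (-1)^{n-1}/n`. Since `δ_n` kills `a` and `ℏ`, it is a derivation with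
`δ_n(e_k) = cₙ (e_k aⁿb + aⁿ e_k)`. On the other side, `aⁿb` is a `𝒞`-combination of the
`e_j` and behaves under `*_q` like a letter whose circle product with `e_k` is `aⁿ e_k`, so
`aⁿb *_q (e_k u) - aⁿb e_k u = e_k (aⁿb *_q u - aⁿb u) + e_k aⁿb u + aⁿ e_k u`:
the same recursion as `δ_n(e_k u) / cₙ`.
-/

section Leibniz

variable {R A : Type*} [CommSemiring R] [Ring A] [Algebra R A] {D : A →ₗ[R] A}

theorem map_one_eq_zero_of_leibniz (hD : ∀ u v, D (u * v) = D u * v + u * D v) : D 1 = 0 := by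
  simpa using hD 1 1

theorem map_algebraMap_eq_zero_of_leibniz (hD : ∀ u v, D (u * v) = D u * v + u * D v)
    (r : R) : D (algebraMap R A r) = 0 := by
  rw [Algebra.algebraMap_eq_smul_one, map_smul, map_one_eq_zero_of_leibniz hD, smul_zero]

theorem map_pow_eq_zero_of_leibniz (hD : ∀ u v, D (u * v) = D u * v + u * D v) {x : A}
    (hx : D x = 0) (m : ℕ) : D (x ^ m) = 0 := by
  induction m with
  | zero => rw [pow_zero, map_one_eq_zero_of_leibniz hD]
  | succ m ih => rw [pow_succ, hD, ih, hx, zero_mul, mul_zero, add_zero]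

end Leibniz

def evPre : ℕ → H
  | 0 => av
  | (k+1) => av ^ k * (av + algebraMap CC H hb)

theorem ev_eq_evPre_mul_bv (k : ℕ) : ev k = evPre k * bv := by
  cases k <;> rfl

theorem evPre_zero : evPre 0 = av ^ 1 := (pow_one av).symm

theorem evPre_succ (k : ℕ) : evPre (k + 1) = av ^ (k + 1) + hb • av ^ k := by
  rw [evPre, mul_add, ← pow_succ, ← Algebra.commutes, Algebra.smul_def]

theorem commute_av_evPre (k : ℕ) : Commute av (evPre k) := by
  cases k with
  | zero => exact Commute.refl av
  | succ k =>
    exact ((Commute.refl av).pow_right k).mul_right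
      ((Commute.refl av).add_right (Algebra.commute_algebraMap_right hb av))

-- `e_j ∘_q e_k` is `e_j` with its final `b` replaced by `e_k`.
theorem circ_eq_evPre_mul_ev (j k : ℕ) : circ j k = evPre j * ev k := by
  rcases j with _ | j <;> rcases k with _ | k <;>
    simp only [circ, ev_eq_evPre_mul_bv, evPre_succ, evPre_zero, add_mul, mul_add, smul_mul_assoc,
      mul_smul_comm, ← mul_assoc, ← pow_add, smul_add, smul_smul, add_sub_cancel_right] <;>
    ring_nf

theorem eword_mem_H1 (l : List ℕ) : eword l ∈ H1 := Submodule.subset_span ⟨l, rfl⟩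

theorem one_mem_H1 : (1 : H) ∈ H1 := eword_mem_H1 []

namespace IsStuffle

variable {st : H →ₗ[CC] H →ₗ[CC] H}

theorem apply_ev_ev_mul (hst : IsStuffle st) (j k : ℕ) {w : H} (hw : w ∈ H1) :
    st (ev j) (ev k * w) = ev j * (ev k * w) + ev k * st (ev j) w + evPre j * ev k * w := by
  have h := hst.2.2 j k 1 w one_mem_H1 hw
  rwa [mul_one, hst.1, hst.1, circ_eq_evPre_mul_ev] at h

-- Induction on `n` via `a^{n+1} b = e_{n+1} - ℏ aⁿb`.
theorem apply_av_pow_mul_bv_ev_mul (hst : IsStuffle st) {n : ℕ} (hn : 1 ≤ n) (k : ℕ) {w : H}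
    (hw : w ∈ H1) :
    st (av ^ n * bv) (ev k * w)
      = av ^ n * bv * (ev k * w) + ev k * st (av ^ n * bv) w + av ^ n * ev k * w := by
  induction n, hn using Nat.le_induction with
  | base => simpa only [ev, evPre, pow_one] using hst.apply_ev_ev_mul 0 k hw
  | succ n _ ih =>
    have hpow : av ^ (n + 1) = evPre (n + 1) - hb • av ^ n := by
      rw [evPre_succ, add_sub_cancel_right]
    simp only [hpow, sub_mul, smul_mul_assoc, ← ev_eq_evPre_mul_bv, map_sub, map_smul,
      LinearMap.sub_apply, LinearMap.smul_apply, hst.apply_ev_ev_mul (n + 1) k hw, ih, mul_sub,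
      mul_smul_comm, smul_add]
    abel

end IsStuffle

namespace IsDelta

variable {δ : ℕ → H →ₗ[CC] H} {st : H →ₗ[CC] H →ₗ[CC] H} {n : ℕ}

theorem map_evPre (hδ : IsDelta δ) (hn : 1 ≤ n) (k : ℕ) : δ n (evPre k) = 0 := by
  obtain ⟨hD, ha, -⟩ := hδ n hn
  cases k with
  | zero => exact ha
  | succ k =>
    rw [evPre, hD, map_pow_eq_zero_of_leibniz hD ha, map_add, ha,
      map_algebraMap_eq_zero_of_leibniz hD, zero_mul, add_zero, mul_zero, add_zero]

theorem map_ev (hδ : IsDelta δ) (hn : 1 ≤ n) (k : ℕ) :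
    δ n (ev k) =
      qs ((-1 : ℚ) ^ (n - 1) / (n : ℚ)) • (ev k * (av ^ n * bv) + av ^ n * ev k) := by
  obtain ⟨hD, -, hbv⟩ := hδ n hn
  rw [ev_eq_evPre_mul_bv, hD, hδ.map_evPre hn, zero_mul, zero_add, hbv, mul_smul_comm,
    ← mul_assoc (av ^ n), ((commute_av_evPre k).pow_left n).eq]
  simp only [mul_add, add_mul, one_mul, mul_assoc]

theorem apply_eword (hδ : IsDelta δ) (hst : IsStuffle st) (hn : 1 ≤ n) (l : List ℕ) :
    δ n (eword l) = qs ((-1 : ℚ) ^ (n - 1) / (n : ℚ)) •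
      (st (av ^ n * bv) (eword l) - av ^ n * bv * eword l) := by
  induction l with
  | nil =>
    rw [eword, List.map_nil, List.prod_nil, map_one_eq_zero_of_leibniz (hδ n hn).1, hst.2.1,
      mul_one, sub_self, smul_zero]
  | cons k l ih =>
    have hcons : eword (k :: l) = ev k * eword l := by simp [eword]
    rw [hcons, (hδ n hn).1, hδ.map_ev hn, ih,
      hst.apply_av_pow_mul_bv_ev_mul hn k (eword_mem_H1 l), smul_mul_assoc, mul_smul_comm,
      ← smul_add]
    congr 1
    simp only [add_mul, mul_sub, mul_assoc]
    abel

theorem apply_of_mem_H1 (hδ : IsDelta δ) (hst : IsStuffle st) (hn : 1 ≤ n) {w : H}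
    (hw : w ∈ H1) :
    δ n w = qs ((-1 : ℚ) ^ (n - 1) / (n : ℚ)) • (st (av ^ n * bv) w - av ^ n * bv * w) := by
  have hwords : Set.EqOn (δ n) ⇑(qs ((-1 : ℚ) ^ (n - 1) / (n : ℚ)) •
      (st (av ^ n * bv) - LinearMap.mulLeft CC (av ^ n * bv) : H →ₗ[CC] H))
      {x | ∃ l, x = eword l} := by
    rintro _ ⟨l, rfl⟩
    exact hδ.apply_eword hst hn l
  exact LinearMap.eqOn_span' hwords hw

end IsDelta

theorem coeff_extMul_C (m : H →ₗ[CC] H →ₗ[CC] H) (f : PowerSeries H) (w : H) (N : ℕ) :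
    PowerSeries.coeff N (extMul m f (PowerSeries.C w)) = m (PowerSeries.coeff N f) w := by
  rw [extMul, PowerSeries.coeff_mk, Finset.sum_eq_single_of_mem (N, 0) (by simp)]
  · simp
  · rintro ⟨i, j⟩ hij hne
    have hj : j ≠ 0 := by
      rintro rfl
      exact hne (by simpa using hij)
    simp [PowerSeries.coeff_C, hj]

/-- For `w ∈ Ĥ¹`,
`D*_X(w) = Σ_{n≥1} X^n δ_n(w) = φ(X) *_q w − φ(X)·w` in `Ĥ¹[[X]]`. -/
theorem Dstar_eq (δ : ℕ → H →ₗ[CC] H) (hδ : IsDelta δ)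
    (st : H →ₗ[CC] H →ₗ[CC] H) (hst : IsStuffle st)
    (w : H) (hw : w ∈ H1) :
    (PowerSeries.mk fun n => if n = 0 then 0 else δ n w)
      = extMul st phiS ((PowerSeries.C (R := H)) w) - phiS * (PowerSeries.C (R := H)) w := by
  ext N
  rw [PowerSeries.coeff_mk, map_sub, coeff_extMul_C, PowerSeries.coeff_mul_C, phiS,
    PowerSeries.coeff_mk]
  rcases N with _ | n
  · simp
  · rw [if_neg n.succ_ne_zero, if_neg n.succ_ne_zero, map_smul, LinearMap.smul_apply,
      smul_mul_assoc, ← smul_sub]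
    exact hδ.apply_of_mem_H1 hst (Nat.le_add_left 1 n) hw

end
end

section
/- Set D^⧢_X = Σ_{n≥1} X^n d_n, ψ(X) = (1/ℏ)·a·log(1 + ℏbX), and define ρ_s(X) ∈ Ĥ¹[[X]] by ρ_1(X) = 1 and ρ_{s+1}(X) = (ψ(X) + log(1 + ℏbX))·ρ_s(X) + ψ(X) ⧢_q ρ_s(X) for s ≥ 1. Then: (i) for every s ≥ 1 and every w ∈ H[[X]], (D^⧢_X)^s(w) = (ψ(X)ρ_s(X)) ⧢_q w − ψ(X)·(ρ_s(X) ⧢_q w); and (ii) for every s ≥ 1, ψ(X)ρ_s(X) = ψ(X)^{⧢_q s} (the s-fold shuffle power). -/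
noncomputable section

/-- The `𝒞[[X]]`-linear map `d_n(w) = ((−ℏ)^{n−1}/n)·((ab^n) ⧢_q w − ab^n·w)` on `H[[X]]`. -/
def dOp (sh : H →ₗ[CC] H →ₗ[CC] H) (n : ℕ) (f : PowerSeries H) : PowerSeries H :=
  PowerSeries.mk fun N =>
    (qs (1 / (n : ℚ)) * (-hb) ^ (n - 1)) •
      (sh (av * bv ^ n) (PowerSeries.coeff (R := H) N f) - av * bv ^ n * PowerSeries.coeff (R := H) N f)

/-- The operator `D^⧢_X = Σ_{n≥1} X^n d_n` on `H[[X]]`. -/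
def DshOp (sh : H →ₗ[CC] H →ₗ[CC] H) (f : PowerSeries H) : PowerSeries H :=
  PowerSeries.mk fun N =>
    ∑ n ∈ Finset.Icc 1 N, PowerSeries.coeff (R := H) (N - n) (dOp sh n f)

/-- `ρ_s(X)` (indexed so that `rhoAux sh s = ρ_{s+1}`): `ρ_1 = 1` and
`ρ_{s+1} = (ψ(X) + log(1+ℏbX))·ρ_s + ψ(X) ⧢_q ρ_s`. -/
def rhoAux (sh : H →ₗ[CC] H →ₗ[CC] H) : ℕ → PowerSeries H
  | 0 => 1
  | (s+1) => (psiS + lgS) * rhoAux sh s + extMul sh psiS (rhoAux sh s)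

/-!
The shuffle product is associative: by induction on the total length of three words, a
leading `b` factors out of both sides, and for three leading `a`s both sides expand to the
same seven terms. Since `D w = ψ ⧢ w − ψ·w`, everything rests on the commutation rule
`ψ ⧢ (ψ·v) = ψ·(ψ ⧢ v) + ψ·(ψ + log(1+ℏbX))·v`, the recursion of `⧢_q` for the letter `a`
read coefficientwise, and on left multiplication by the `b`-series `log(1+ℏbX)` commuting
with `⧢_q`. The rule says `ψ·ρ_{s+1} = ψ ⧢ (ψ·ρ_s)`, which gives (ii); applying `D` to the
formula for `D^s` and using associativity gives the formula for `D^{s+1}`.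
-/

variable {sh : H →ₗ[CC] H →ₗ[CC] H}

namespace IsShuffle

theorem one_left (hsh : IsShuffle sh) (w : H) : sh 1 w = w := hsh.1 w

theorem one_right (hsh : IsShuffle sh) (w : H) : sh w 1 = w := hsh.2.1 w

theorem av_mul_av_mul (hsh : IsShuffle sh) (w w' : H) :
    sh (av * w) (av * w') = av * (sh (av * w) w' + sh w (av * w') + hb • sh w w') :=
  hsh.2.2.1 w w'

theorem bv_mul_left (hsh : IsShuffle sh) (w w' : H) : sh (bv * w) w' = bv * sh w w' :=
  hsh.2.2.2.1 w w'

theorem bv_mul_right (hsh : IsShuffle sh) (w w' : H) : sh w (bv * w') = bv * sh w w' :=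
  hsh.2.2.2.2 w w'

theorem bv_pow_mul_left (hsh : IsShuffle sh) (n : ℕ) (w w' : H) :
    sh (bv ^ n * w) w' = bv ^ n * sh w w' := by
  induction n with
  | zero => simp
  | succ n ih => rw [pow_succ', mul_assoc, hsh.bv_mul_left, ih, mul_assoc]

theorem bv_pow_mul_right (hsh : IsShuffle sh) (n : ℕ) (w w' : H) :
    sh w (bv ^ n * w') = bv ^ n * sh w w' := by
  induction n with
  | zero => simp
  | succ n ih => rw [pow_succ', mul_assoc, hsh.bv_mul_right, ih, mul_assoc]

theorem av_mul_bv_pow_av_mul_bv_pow (hsh : IsShuffle sh) (m n : ℕ) (x : H) :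
    sh (av * bv ^ m) (av * bv ^ n * x) =
      av * bv ^ n * sh (av * bv ^ m) x + av * bv ^ m * ((av * bv ^ n + hb • bv ^ n) * x) := by
  have hbm : ∀ w, sh (bv ^ m) w = bv ^ m * w := fun w => by
    simpa [hsh.one_left] using hsh.bv_pow_mul_left m 1 w
  rw [mul_assoc av, hsh.av_mul_av_mul, hsh.bv_pow_mul_right, hbm, hbm]
  simp only [mul_add, add_mul, mul_smul_comm, smul_mul_assoc, mul_assoc, add_assoc]

end IsShuffle

def word (l : List (Fin 2)) : H := (l.map (FreeAlgebra.ι CC)).prod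

theorem word_nil : word [] = 1 := rfl

theorem word_append (l l' : List (Fin 2)) : word (l ++ l') = word l * word l' := by
  simp [word]

theorem word_cons_eq_bv_mul_or_av_mul (i : Fin 2) (l : List (Fin 2)) :
    word (i :: l) = bv * word l ∨ word (i :: l) = av * word l := by
  fin_cases i
  · exact Or.inr rfl
  · exact Or.inl rfl

theorem span_range_word : Submodule.span CC (Set.range word) = ⊤ := by
  set W := Submodule.span CC (Set.range word)
  have mul_mem : ∀ {x y : H}, x ∈ W → y ∈ W → x * y ∈ W := by
    intro x y hx hy
    induction hx using Submodule.span_induction with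
    | mem x hx =>
      obtain ⟨l, rfl⟩ := hx
      induction hy using Submodule.span_induction with
      | mem y hy =>
        obtain ⟨l', rfl⟩ := hy
        exact Submodule.subset_span ⟨l ++ l', word_append l l'⟩
      | zero => simp
      | add y z _ _ hy hz => rw [mul_add]; exact W.add_mem hy hz
      | smul c y _ hy => rw [mul_smul_comm]; exact W.smul_mem c hy
    | zero => simp
    | add x z _ _ hx hz => rw [add_mul]; exact W.add_mem hx hz
    | smul c x _ hx => rw [smul_mul_assoc]; exact W.smul_mem c hx
  refine Submodule.eq_top_iff'.2 fun x => ?_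
  induction x using FreeAlgebra.induction with
  | grade0 c =>
    rw [Algebra.algebraMap_eq_smul_one]
    exact W.smul_mem c (Submodule.subset_span ⟨[], word_nil⟩)
  | grade1 i => exact Submodule.subset_span ⟨[i], by simp [word]⟩
  | mul x y hx hy => exact mul_mem hx hy
  | add x y hx hy => exact W.add_mem hx hy

@[elab_as_elim]
theorem word_induction {motive : H → Prop} (word : ∀ l, motive (word l))
    (add : ∀ x y, motive x → motive y → motive (x + y))
    (smul : ∀ (c : CC) x, motive x → motive (c • x)) (x : H) : motive x := by
  have hx : x ∈ (⊤ : Submodule CC H) := Submodule.mem_top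
  rw [← span_range_word] at hx
  induction hx using Submodule.span_induction with
  | mem x hx => obtain ⟨l, rfl⟩ := hx; exact word l
  | zero => simpa using smul 0 _ (word [])
  | add x y _ _ hx hy => exact add x y hx hy
  | smul c x _ hx => exact smul c x hx

namespace IsShuffle

theorem assoc_bv_mul_left (hsh : IsShuffle sh) {x y z : H}
    (h : sh x (sh y z) = sh (sh x y) z) : sh (bv * x) (sh y z) = sh (sh (bv * x) y) z := by
  rw [hsh.bv_mul_left, hsh.bv_mul_left, hsh.bv_mul_left, h]

theorem assoc_bv_mul_mid (hsh : IsShuffle sh) {x y z : H}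
    (h : sh x (sh y z) = sh (sh x y) z) : sh x (sh (bv * y) z) = sh (sh x (bv * y)) z := by
  rw [hsh.bv_mul_left, hsh.bv_mul_right, hsh.bv_mul_right, hsh.bv_mul_left, h]

theorem assoc_bv_mul_right (hsh : IsShuffle sh) {x y z : H}
    (h : sh x (sh y z) = sh (sh x y) z) : sh x (sh y (bv * z)) = sh (sh x y) (bv * z) := by
  rw [hsh.bv_mul_right, hsh.bv_mul_right, hsh.bv_mul_right, h]

theorem assoc_av_mul (hsh : IsShuffle sh) {x y z : H}
    (h₁ : sh (av * x) (sh (av * y) z) = sh (sh (av * x) (av * y)) z)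
    (h₂ : sh (av * x) (sh y (av * z)) = sh (sh (av * x) y) (av * z))
    (h₃ : sh (av * x) (sh y z) = sh (sh (av * x) y) z)
    (h₄ : sh x (sh (av * y) (av * z)) = sh (sh x (av * y)) (av * z))
    (h₅ : sh x (sh (av * y) z) = sh (sh x (av * y)) z)
    (h₆ : sh x (sh y (av * z)) = sh (sh x y) (av * z))
    (h₇ : sh x (sh y z) = sh (sh x y) z) :
    sh (av * x) (sh (av * y) (av * z)) = sh (sh (av * x) (av * y)) (av * z) := by
  set S := sh (av * y) z + sh y (av * z) + hb • sh y z
  set T := sh (av * x) y + sh x (av * y) + hb • sh x y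
  calc sh (av * x) (sh (av * y) (av * z))
      = av * (sh (av * x) S + sh x (sh (av * y) (av * z)) + hb • sh x S) := by
        rw [hsh.av_mul_av_mul y z, hsh.av_mul_av_mul x S]
    _ = av * (sh (sh (av * x) (av * y)) z + sh T (av * z) + hb • sh T z) := by
        simp only [S, T, map_add, map_smul, LinearMap.add_apply, LinearMap.smul_apply,
          h₁, h₂, h₃, h₄, h₅, h₆, h₇]
        congr 1
        module
    _ = sh (sh (av * x) (av * y)) (av * z) := by
        rw [hsh.av_mul_av_mul x y, hsh.av_mul_av_mul T z]

theorem assoc_word (hsh : IsShuffle sh) (n : ℕ) (l₁ l₂ l₃ : List (Fin 2))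
    (hn : l₁.length + l₂.length + l₃.length < n) :
    sh (word l₁) (sh (word l₂) (word l₃)) = sh (sh (word l₁) (word l₂)) (word l₃) := by
  induction n generalizing l₁ l₂ l₃ with
  | zero => omega
  | succ n ih =>
    rcases l₁ with _ | ⟨i, t₁⟩
    · simp [word_nil, hsh.one_left]
    rcases l₂ with _ | ⟨j, t₂⟩
    · simp [word_nil, hsh.one_left, hsh.one_right]
    rcases l₃ with _ | ⟨k, t₃⟩
    · simp [word_nil, hsh.one_right]
    obtain hx | hx := word_cons_eq_bv_mul_or_av_mul i t₁
    · rw [hx]; exact hsh.assoc_bv_mul_left (ih _ _ _ (by grind))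
    obtain hy | hy := word_cons_eq_bv_mul_or_av_mul j t₂
    · rw [hy]; exact hsh.assoc_bv_mul_mid (ih (i :: t₁) _ _ (by grind))
    obtain hz | hz := word_cons_eq_bv_mul_or_av_mul k t₃
    · rw [hz]; exact hsh.assoc_bv_mul_right (ih (i :: t₁) (j :: t₂) _ (by grind))
    rw [hx, hy, hz]
    refine hsh.assoc_av_mul ?_ ?_ ?_ ?_ ?_ ?_ ?_ <;>
      (try simp only [← hx, ← hy, ← hz]) <;> exact ih _ _ _ (by grind)

theorem assoc (hsh : IsShuffle sh) (x y z : H) : sh x (sh y z) = sh (sh x y) z := by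
  induction x using word_induction with
  | word l₁ =>
    induction y using word_induction with
    | word l₂ =>
      induction z using word_induction with
      | word l₃ => exact hsh.assoc_word _ l₁ l₂ l₃ (Nat.lt_succ_self _)
      | add z z' h h' => simp only [map_add, h, h']
      | smul c z h => rw [map_smul, map_smul, map_smul, h]
    | add y y' h h' => simp only [map_add, LinearMap.add_apply, h, h']
    | smul c y h => simp only [map_smul, LinearMap.smul_apply, h]
  | add x x' h h' => simp only [map_add, LinearMap.add_apply, h, h']
  | smul c x h => simp only [map_smul, LinearMap.smul_apply, h]

end IsShuffle

open Finset PowerSeries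

theorem sum_antidiagonal_assoc {M : Type*} [AddCommMonoid M] (F : ℕ → ℕ → ℕ → M) (N : ℕ) :
    ∑ p ∈ antidiagonal N, ∑ q ∈ antidiagonal p.1, F q.1 q.2 p.2 =
      ∑ p ∈ antidiagonal N, ∑ q ∈ antidiagonal p.2, F p.1 q.1 q.2 := by
  rw [sum_sigma', sum_sigma']
  refine sum_nbij' (fun x => ⟨(x.2.1, x.2.2 + x.1.2), (x.2.2, x.1.2)⟩)
    (fun x => ⟨(x.1.1 + x.2.1, x.2.2), (x.1.1, x.2.1)⟩) ?_ ?_ ?_ ?_ ?_ <;>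
    rintro ⟨⟨a, b⟩, ⟨c, d⟩⟩ hx <;>
    simp only [mem_sigma, HasAntidiagonal.mem_antidiagonal] at hx ⊢ <;>
    simp_all <;> omega

theorem sum_antidiagonal_left_comm {M : Type*} [AddCommMonoid M] (F : ℕ → ℕ → ℕ → M) (N : ℕ) :
    ∑ p ∈ antidiagonal N, ∑ q ∈ antidiagonal p.2, F p.1 q.1 q.2 =
      ∑ p ∈ antidiagonal N, ∑ q ∈ antidiagonal p.2, F q.1 p.1 q.2 := by
  rw [← sum_antidiagonal_assoc, ← sum_antidiagonal_assoc (fun i j k => F j i k)]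
  exact sum_congr rfl fun p _ => (Nat.sum_antidiagonal_swap (f := fun q => F q.1 q.2 p.2)).symm

section extMul

variable (m : H →ₗ[CC] H →ₗ[CC] H)

theorem coeff_extMul (f g : PowerSeries H) (N : ℕ) :
    coeff N (extMul m f g) = ∑ p ∈ antidiagonal N, m (coeff p.1 f) (coeff p.2 g) :=
  coeff_mk _ _

theorem extMul_add_left (f g h : PowerSeries H) :
    extMul m (f + g) h = extMul m f h + extMul m g h := by
  ext N
  simp [coeff_extMul, sum_add_distrib]

theorem extMul_sub_right (f g h : PowerSeries H) :
    extMul m f (g - h) = extMul m f g - extMul m f h := by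
  ext N
  simp [coeff_extMul, sum_sub_distrib]

theorem extMul_one_left (hm : ∀ w, m 1 w = w) (w : PowerSeries H) : extMul m 1 w = w := by
  ext N
  rw [coeff_extMul, Nat.sum_antidiagonal_eq_sum_range_succ_mk, sum_range_succ']
  simp [coeff_one, hm]

theorem extMul_assoc (hm : ∀ x y z, m x (m y z) = m (m x y) z) (f g h : PowerSeries H) :
    extMul m f (extMul m g h) = extMul m (extMul m f g) h := by
  ext N
  simp only [coeff_extMul, map_sum, LinearMap.sum_apply, hm]
  exact (sum_antidiagonal_assoc (fun i j k => m (m (coeff i f) (coeff j g)) (coeff k h)) N).symm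

theorem extMul_mul_left {g : PowerSeries H}
    (hg : ∀ i x y, m (coeff i g * x) y = coeff i g * m x y) (u w : PowerSeries H) :
    extMul m (g * u) w = g * extMul m u w := by
  ext N
  simp only [coeff_extMul, coeff_mul, map_sum, LinearMap.sum_apply, hg, mul_sum]
  exact sum_antidiagonal_assoc (fun i j k => coeff i g * m (coeff j u) (coeff k w)) N

theorem extMul_mul_right {f g k : PowerSeries H}
    (h : ∀ i j x, m (coeff i f) (coeff j g * x) =
      coeff j g * m (coeff i f) x + coeff i f * (coeff j k * x)) (v : PowerSeries H) :
    extMul m f (g * v) = g * extMul m f v + f * (k * v) := by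
  ext N
  simp only [coeff_extMul, coeff_mul, map_add, map_sum, h, sum_add_distrib, mul_sum]
  rw [sum_antidiagonal_left_comm (fun i j l => coeff j g * m (coeff i f) (coeff l v))]

end extMul

/-- `psiScalar 0 = 0` because `(1 : ℚ) / 0 = 0`, so the coefficient formulas below hold for
all `n`. -/
def psiScalar (n : ℕ) : CC := qs ((-1 : ℚ) ^ (n - 1) / n) * hb ^ (n - 1)

theorem psiScalar_zero : psiScalar 0 = 0 := by simp [psiScalar, qs]

theorem coeff_psiS (n : ℕ) : coeff n psiS = psiScalar n • (av * bv ^ n) := by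
  rcases n with _ | n
  · simp [psiS, psiScalar_zero]
  · simp [psiS, psiScalar]

theorem coeff_lgS (n : ℕ) : coeff n lgS = (psiScalar n * hb) • bv ^ n := by
  rcases n with _ | n
  · simp [lgS, psiScalar_zero]
  · simp [lgS, psiScalar, pow_succ, mul_assoc]

theorem dOp_scalar_eq_psiScalar (n : ℕ) : qs (1 / (n : ℚ)) * (-hb) ^ (n - 1) = psiScalar n := by
  simp only [psiScalar, qs, neg_pow hb, div_eq_mul_inv, map_mul, map_pow, map_neg, map_one]
  ring

theorem DshOp_eq (sh : H →ₗ[CC] H →ₗ[CC] H) (w : PowerSeries H) :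
    DshOp sh w = extMul sh psiS w - psiS * w := by
  ext N
  rw [map_sub, coeff_extMul, coeff_mul, ← sum_sub_distrib,
    Nat.sum_antidiagonal_eq_sum_range_succ
      (fun i j => sh (coeff i psiS) (coeff j w) - coeff i psiS * coeff j w),
    DshOp, coeff_mk]
  have hsub : Icc 1 N ⊆ range (N + 1) := fun n hn => by simp at hn ⊢; omega
  rw [← sum_subset hsub fun n hN hn => ?_]
  · refine sum_congr rfl fun n _ => ?_
    simp only [dOp, coeff_mk, dOp_scalar_eq_psiScalar, coeff_psiS, map_smul,
      LinearMap.smul_apply, smul_mul_assoc, smul_sub]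
  · obtain rfl : n = 0 := by simp at hN hn; omega
    simp [coeff_psiS, psiScalar_zero]

namespace IsShuffle

theorem coeff_lgS_mul (hsh : IsShuffle sh) (i : ℕ) (x y : H) :
    sh (coeff i lgS * x) y = coeff i lgS * sh x y := by
  rw [coeff_lgS, smul_mul_assoc, map_smul, LinearMap.smul_apply, hsh.bv_pow_mul_left,
    smul_mul_assoc]

theorem coeff_psiS_coeff_psiS_mul (hsh : IsShuffle sh) (i j : ℕ) (x : H) :
    sh (coeff i psiS) (coeff j psiS * x) =
      coeff j psiS * sh (coeff i psiS) x + coeff i psiS * (coeff j (psiS + lgS) * x) := by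
  simp only [map_add, coeff_psiS, coeff_lgS, smul_mul_assoc, map_smul, LinearMap.smul_apply]
  rw [← smul_mul_assoc, hsh.av_mul_bv_pow_av_mul_bv_pow]
  simp only [mul_add, add_mul, smul_add, mul_smul_comm, smul_mul_assoc, smul_smul]
  module

theorem extMul_lgS_mul (hsh : IsShuffle sh) (u w : PowerSeries H) :
    extMul sh (lgS * u) w = lgS * extMul sh u w :=
  extMul_mul_left sh hsh.coeff_lgS_mul u w

theorem extMul_psiS_psiS_mul (hsh : IsShuffle sh) (v : PowerSeries H) :
    extMul sh psiS (psiS * v) = psiS * extMul sh psiS v + psiS * ((psiS + lgS) * v) :=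
  extMul_mul_right sh hsh.coeff_psiS_coeff_psiS_mul v

theorem psiS_mul_rhoAux_succ (hsh : IsShuffle sh) (s : ℕ) :
    psiS * rhoAux sh (s + 1) = extMul sh psiS (psiS * rhoAux sh s) := by
  rw [rhoAux, hsh.extMul_psiS_psiS_mul]
  noncomm_ring

theorem DshOp_extMul_psiS_mul_rhoAux_sub (hsh : IsShuffle sh) (s : ℕ) (w : PowerSeries H) :
    DshOp sh (extMul sh (psiS * rhoAux sh s) w - psiS * extMul sh (rhoAux sh s) w) =
      extMul sh (psiS * rhoAux sh (s + 1)) w - psiS * extMul sh (rhoAux sh (s + 1)) w := by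
  have hassoc := extMul_assoc sh hsh.assoc
  set r := rhoAux sh s
  have h₁ : extMul sh psiS (extMul sh (psiS * r) w) = extMul sh (psiS * rhoAux sh (s + 1)) w := by
    rw [hassoc, hsh.psiS_mul_rhoAux_succ]
  have h₂ : extMul sh psiS (psiS * extMul sh r w) =
      psiS * extMul sh (extMul sh psiS r) w + psiS * ((psiS + lgS) * extMul sh r w) := by
    rw [hsh.extMul_psiS_psiS_mul, hassoc]
  have h₃ : extMul sh (rhoAux sh (s + 1)) w =
      extMul sh (psiS * r) w + lgS * extMul sh r w + extMul sh (extMul sh psiS r) w := by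
    rw [rhoAux, add_mul, extMul_add_left, extMul_add_left, hsh.extMul_lgS_mul]
  rw [DshOp_eq, extMul_sub_right, h₁, h₂, h₃]
  simp only [mul_add, mul_sub, add_mul, ← mul_assoc]
  abel

theorem psiS_mul_rhoAux_eq_itpow (hsh : IsShuffle sh) (s : ℕ) :
    psiS * rhoAux sh s = itpow sh psiS (s + 1) := by
  induction s with
  | zero => exact mul_one psiS
  | succ s ih => rw [hsh.psiS_mul_rhoAux_succ, ih]; rfl

theorem DshOp_iterate_succ (hsh : IsShuffle sh) (s : ℕ) (w : PowerSeries H) :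
    (DshOp sh)^[s + 1] w = extMul sh (psiS * rhoAux sh s) w - psiS * extMul sh (rhoAux sh s) w := by
  induction s with
  | zero => rw [Function.iterate_one, DshOp_eq, rhoAux, mul_one, extMul_one_left sh hsh.one_left]
  | succ s ih =>
    rw [Function.iterate_succ_apply', ih, hsh.DshOp_extMul_psiS_mul_rhoAux_sub]

end IsShuffle

/-- (i) `(D^⧢_X)^s(w) = (ψ(X)ρ_s(X)) ⧢_q w − ψ(X)·(ρ_s(X) ⧢_q w)`
for all `s ≥ 1` and `w ∈ H[[X]]`; (ii) `ψ(X)ρ_s(X) = ψ(X)^{⧢_q s}` for all `s ≥ 1`. -/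
theorem DshOp_iterate_eq (sh : H →ₗ[CC] H →ₗ[CC] H) (hsh : IsShuffle sh)
    (s : ℕ) (hs : 1 ≤ s) :
    (∀ w : PowerSeries H,
      (DshOp sh)^[s] w
        = extMul sh (psiS * rhoAux sh (s - 1)) w
            - psiS * extMul sh (rhoAux sh (s - 1)) w) ∧
    psiS * rhoAux sh (s - 1) = itpow sh psiS s := by
  obtain ⟨t, rfl⟩ := Nat.exists_eq_add_of_le' hs
  exact ⟨hsh.DshOp_iterate_succ t, hsh.psiS_mul_rhoAux_eq_itpow t⟩
end
end
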